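/- For fixed θ ∈ ℝ₊ⁿ, the map λ ↦ p_S(λθ)/λ is decreasing on (0,∞), under the assumptions that for each fixed aᵢ the map θᵢ ↦ (1/θᵢ)·∂v̄ᵢ(aᵢ,θᵢ)/∂aᵢ is decreasing, and the regularity assumptions guaranteeing the envelope-theorem formula for ∂p_S/∂θᵢ. -/

import Mathlib

/-!
For `λ₁ ≤ λ₂` put `g₀ j x = v̄ⱼ(x, λ₂θⱼ) / λ₂` and `g₁ j x = v̄ⱼ(x, λ₁θⱼ) / λ₁`. Then `p_S(λθ) / λ`
is the Clarke surplus `∑ᵢ W₋ᵢ - (n - 1) W` of the allocation problem with objective `g₀` resp. `g₁`,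
and the hypothesis on `θᵢ ↦ θᵢ⁻¹ ∂v̄ᵢ/∂aᵢ` says that `g₁ - g₀` is increasing in the allocation.

Along `g_σ = (1 - σ) g₀ + σ g₁` each optimal value is a maximum of affine functions of `σ`, so its
increments are controlled by `g₁ - g₀` at optimal allocations (a discrete envelope theorem). When an
agent is removed, concavity yields an optimum of the smaller problem dominating the full optimum `A`
coordinatewise; as `g₁ - g₀` is increasing, the slopes of the `W₋ᵢ` then add up to at least `n - 1`
times the slope of `W`, up to an error that telescopes to zero along a fine grid in `σ`.
-/

open Finset

theorem ConcaveOn.add_le_add_sub_of_mem_uIcc {s : Set ℝ} {f : ℝ → ℝ} (hf : ConcaveOn ℝ s f)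
    {x y z : ℝ} (hx : x ∈ s) (hy : y ∈ s) (hz : z ∈ Set.uIcc x y) :
    f x + f y ≤ f z + f (x + y - z) := by
  rw [← segment_eq_uIcc] at hz
  obtain ⟨a, b, ha, hb, hab, rfl⟩ := hz
  have h₁ := hf.2 hx hy ha hb hab
  have h₂ := hf.2 hx hy hb ha (by rw [add_comm, hab])
  have hsub : x + y - (a • x + b • y) = b • x + a • y := by
    simp only [smul_eq_mul]
    linear_combination (-(x + y)) * hab
  rw [hsub]
  simp only [smul_eq_mul] at h₁ h₂ ⊢
  linear_combination h₁ + h₂ - (f x + f y) * hab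

lemma le_of_forall_pos_of_continuousAt {u₁ u₂ : ℝ → ℝ} (h₁ : ContinuousAt u₁ 0)
    (h₂ : ContinuousAt u₂ 0) (h : ∀ t, 0 < t → u₁ t ≤ u₂ t) : u₁ 0 ≤ u₂ 0 :=
  le_of_tendsto_of_tendsto (h₁.tendsto.mono_left nhdsWithin_le_nhds)
    (h₂.tendsto.mono_left nhdsWithin_le_nhds) (eventually_nhdsWithin_of_forall (s := Set.Ioi 0) h)

lemma le_of_forall_mul_sub_le_sub {F φ : ℝ → ℝ}
    (h : ∀ s ∈ Set.Icc (0 : ℝ) 1, ∀ t ∈ Set.Icc (0 : ℝ) 1, s ≤ t →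
      (t - s) * (φ s - φ t) ≤ F t - F s) :
    F 0 ≤ F 1 := by
  have hN : ∀ N : ℕ, 0 < N → (φ 0 - φ 1) / N ≤ F 1 - F 0 := by
    intro N hN
    have hN' : (0 : ℝ) < N := by exact_mod_cast hN
    have hmem : ∀ k ≤ N, (k : ℝ) / N ∈ Set.Icc (0 : ℝ) 1 := fun k hk =>
      ⟨by positivity, div_le_one_of_le₀ (by exact_mod_cast hk) hN'.le⟩
    have hstep : ∀ k ∈ range N, (φ (k / N) - φ ((k + 1 : ℕ) / N)) / N ≤
        F ((k + 1 : ℕ) / N) - F (k / N) := by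
      intro k hk
      have hk := mem_range.1 hk
      have hmesh : ((k + 1 : ℕ) : ℝ) / N - k / N = 1 / N := by push_cast; ring
      have := h _ (hmem k hk.le) _ (hmem (k + 1) hk) (by rw [← sub_nonneg, hmesh]; positivity)
      rwa [hmesh, one_div_mul_eq_div] at this
    have := sum_le_sum hstep
    rw [← sum_div, sum_range_sub' (fun k : ℕ => φ (k / N)),
      sum_range_sub (fun k : ℕ => F (k / N))] at this
    simpa [hN'.ne'] using this
  exact sub_nonneg.1 <| le_of_tendsto (tendsto_const_div_atTop_nhds_zero_nat _) <|
    Filter.eventually_atTop.2 ⟨1, fun N hN' => hN N hN'⟩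

lemma add_mul_max_sub_mem {a c μ : ℝ} (hc : c ≤ 1) (ha : a ≤ 1) (hμ : μ ∈ Set.Icc (0 : ℝ) 1) :
    a + μ * max (c - a) 0 ∈ Set.uIcc c a ∩ Set.Icc a 1 := by
  rcases le_total c a with h | h
  · rw [max_eq_right (sub_nonpos.2 h), mul_zero, add_zero]
    exact ⟨Set.right_mem_uIcc, le_rfl, ha⟩
  · rw [max_eq_left (sub_nonneg.2 h), Set.uIcc_of_ge h]
    have h₁ : μ * (c - a) ≤ c - a := mul_le_of_le_one_left (sub_nonneg.2 h) hμ.2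
    have h₀ : 0 ≤ μ * (c - a) := mul_nonneg hμ.1 (sub_nonneg.2 h)
    exact ⟨⟨by linarith, by linarith⟩, by linarith, by linarith⟩

section Welfare

variable {ι : Type*}

def feasibleAllocs (s : Finset ι) : Set (ι → ℝ) := {a | (∀ j, 0 ≤ a j) ∧ ∑ j ∈ s, a j ≤ 1}

def boundedAllocs (s : Finset ι) (lo : ι → ℝ) : Set (ι → ℝ) :=
  Set.pi Set.univ (fun j => Set.Icc (lo j) 1) ∩ {a | ∑ j ∈ s, a j ≤ 1}

def welfareSet (s : Finset ι) (g : ι → ℝ → ℝ) : Set ℝ :=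
  {w | ∃ a : ι → ℝ, (∀ j, 0 ≤ a j) ∧ (∑ j ∈ s, a j) ≤ 1 ∧ w = ∑ j ∈ s, g j (a j)}

noncomputable def maxWelfare (s : Finset ι) (g : ι → ℝ → ℝ) : ℝ := sSup (welfareSet s g)

def IsOptimalAlloc (s : Finset ι) (g : ι → ℝ → ℝ) (a : ι → ℝ) : Prop :=
  a ∈ feasibleAllocs s ∧ ∀ c ∈ feasibleAllocs s, ∑ j ∈ s, g j (c j) ≤ ∑ j ∈ s, g j (a j)

noncomputable def clarkeSurplus [Fintype ι] [DecidableEq ι] (g : ι → ℝ → ℝ) : ℝ :=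
  ∑ i, maxWelfare (univ.erase i) g - ((Fintype.card ι : ℝ) - 1) * maxWelfare univ g

variable {s : Finset ι} {g : ι → ℝ → ℝ} {a : ι → ℝ}

lemma mem_Icc_of_mem_feasibleAllocs (ha : a ∈ feasibleAllocs s) {j : ι} (hj : j ∈ s) :
    a j ∈ Set.Icc (0 : ℝ) 1 :=
  ⟨ha.1 j, (single_le_sum (fun k _ => ha.1 k) hj).trans ha.2⟩

lemma IsOptimalAlloc.isGreatest (h : IsOptimalAlloc s g a) :
    IsGreatest (welfareSet s g) (∑ j ∈ s, g j (a j)) :=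
  ⟨⟨a, h.1.1, h.1.2, rfl⟩, by rintro _ ⟨c, hc₀, hc₁, rfl⟩; exact h.2 c ⟨hc₀, hc₁⟩⟩

lemma IsOptimalAlloc.maxWelfare_eq (h : IsOptimalAlloc s g a) :
    maxWelfare s g = ∑ j ∈ s, g j (a j) :=
  h.isGreatest.csSup_eq

lemma IsGreatest.welfareSet_div {V : ℝ} (h : IsGreatest (welfareSet s g) V) {l : ℝ}
    (hl : 0 < l) : IsGreatest (welfareSet s fun j x => g j x / l) (V / l) := by
  obtain ⟨⟨a, ha₀, ha₁, rfl⟩, hV⟩ := h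
  refine ⟨⟨a, ha₀, ha₁, by rw [sum_div]⟩, ?_⟩
  rintro _ ⟨c, hc₀, hc₁, rfl⟩
  rw [← sum_div]
  exact div_le_div_of_nonneg_right (hV ⟨c, hc₀, hc₁, rfl⟩) hl.le

lemma exists_isMaxOn_boundedAllocs (s : Finset ι) (hg : ∀ j, ContinuousOn (g j) (Set.Icc 0 1))
    {lo : ι → ℝ} (hlo : ∀ j, lo j ∈ Set.Icc 0 1) (hlos : ∑ j ∈ s, lo j ≤ 1) :
    ∃ a ∈ boundedAllocs s lo, IsMaxOn (fun c => ∑ j ∈ s, g j (c j)) (boundedAllocs s lo) a := by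
  have hcpt : IsCompact (boundedAllocs s lo) :=
    (isCompact_univ_pi fun _ => isCompact_Icc).inter_right
      (isClosed_le (continuous_finsetSum _ fun j _ => continuous_apply j) continuous_const)
  refine hcpt.exists_isMaxOn ⟨lo, fun j _ => ⟨le_rfl, (hlo j).2⟩, hlos⟩ ?_
  exact continuousOn_finsetSum _ fun j _ => (hg j).comp (continuous_apply j).continuousOn
    fun a ha => Set.Icc_subset_Icc_left (hlo j).1 (ha.1 j (Set.mem_univ j))

variable [Fintype ι]

lemma exists_isOptimalAlloc (hg : ∀ j, ContinuousOn (g j) (Set.Icc 0 1)) :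
    ∃ a, IsOptimalAlloc univ g a := by
  obtain ⟨a, ⟨ha, ha₁⟩, hmax⟩ :=
    exists_isMaxOn_boundedAllocs univ hg (lo := 0) (fun _ => ⟨le_rfl, zero_le_one⟩) (by simp)
  exact ⟨a, ⟨fun j => (ha j (Set.mem_univ j)).1, ha₁⟩, fun c hc =>
    hmax ⟨fun j _ => mem_Icc_of_mem_feasibleAllocs hc (mem_univ j), hc.2⟩⟩

variable [DecidableEq ι]

lemma exists_mem_boundedAllocs_and_sub_mem_feasibleAllocs {A c : ι → ℝ}
    (hA : A ∈ feasibleAllocs univ) (hc : ∀ j, c j ∈ Set.Icc (0 : ℝ) 1)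
    (hcA : ∀ j ∉ s, c j = A j) (hcs : ∑ j ∈ s, c j ≤ 1) :
    ∃ y ∈ boundedAllocs s A, (∀ j, y j ∈ Set.uIcc (c j) (A j)) ∧
      (fun j => c j + A j - y j) ∈ feasibleAllocs univ := by
  have hA₁ : ∀ j, A j ∈ Set.Icc (0 : ℝ) 1 := fun j => mem_Icc_of_mem_feasibleAllocs hA (mem_univ j)
  -- `y := A + μ (c - A)⁺` keeps as much of the excess of `c` over `A` as the budget of `s` allows
  set P := ∑ j ∈ s, max (c j - A j) 0
  set m := min P (1 - ∑ j ∈ s, A j)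
  have hsA : ∑ j ∈ s, A j + ∑ j ∈ sᶜ, A j ≤ 1 := (sum_add_sum_compl s A).symm ▸ hA.2
  have hP₀ : 0 ≤ P := sum_nonneg fun _ _ => le_max_right _ _
  have hm₀ : 0 ≤ m := le_min hP₀ (by linarith [sum_nonneg fun j (_ : j ∈ sᶜ) => hA.1 j])
  have hmP : m ≤ P := min_le_left _ _
  set μ := m / P
  have hμP : μ * P = m := by
    rcases hP₀.eq_or_lt with hP | hP
    · rw [← hP, mul_zero]; linarith
    · exact div_mul_cancel₀ _ hP.ne'
  have hμ : μ ∈ Set.Icc (0 : ℝ) 1 := ⟨div_nonneg hm₀ hP₀, div_le_one_of_le₀ hmP hP₀⟩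
  set y : ι → ℝ := fun j => A j + μ * max (c j - A j) 0
  have hy : ∀ j, y j ∈ Set.uIcc (c j) (A j) ∩ Set.Icc (A j) 1 :=
    fun j => add_mul_max_sub_mem (hc j).2 (hA₁ j).2 hμ
  have hsum_y : ∑ j ∈ s, y j = ∑ j ∈ s, A j + m := by
    rw [← hμP, mul_sum, ← sum_add_distrib]
  have hys : ∑ j ∈ s, y j ≤ 1 := by linarith [min_le_right P (1 - ∑ j ∈ s, A j)]
  refine ⟨y, ⟨fun j _ => (hy j).2, hys⟩, fun j => (hy j).1, fun j => ?_, ?_⟩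
  · rcases Set.mem_uIcc.1 (hy j).1 with h | h <;> linarith [(hc j).1, (hA₁ j).1]
  have hz_s : ∑ j ∈ s, (c j + A j - y j) = ∑ j ∈ s, c j + ∑ j ∈ s, A j - ∑ j ∈ s, y j := by
    rw [← sum_add_distrib, ← sum_sub_distrib]
  have hz_sc : ∑ j ∈ sᶜ, (c j + A j - y j) = ∑ j ∈ sᶜ, A j := sum_congr rfl fun j hj => by
    simp [y, hcA j (mem_compl.1 hj)]
  have hcP : ∑ j ∈ s, c j ≤ ∑ j ∈ s, A j + P := by
    rw [← sum_add_distrib]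
    exact sum_le_sum fun j _ => by linarith [le_max_left (c j - A j) 0]
  change ∑ j, (c j + A j - y j) ≤ 1
  rw [← sum_add_sum_compl s, hz_s, hz_sc, hsum_y]
  rcases min_choice P (1 - ∑ j ∈ s, A j) with h | h <;> linarith

lemma exists_mem_boundedAllocs_welfare_ge (hconc : ∀ j, ConcaveOn ℝ (Set.Icc 0 1) (g j))
    {A : ι → ℝ} (hA : IsOptimalAlloc univ g A) {c : ι → ℝ} (hc : c ∈ feasibleAllocs s) :
    ∃ y ∈ boundedAllocs s A, ∑ j ∈ s, g j (c j) ≤ ∑ j ∈ s, g j (y j) := by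
  have hA₁ : ∀ j, A j ∈ Set.Icc (0 : ℝ) 1 :=
    fun j => mem_Icc_of_mem_feasibleAllocs hA.1 (mem_univ j)
  set c' := s.piecewise c A
  have hc'_mem : ∀ j ∈ s, c' j = c j := fun j hj => s.piecewise_eq_of_mem _ _ hj
  have hc'_notMem : ∀ j ∉ s, c' j = A j := fun j hj => s.piecewise_eq_of_notMem _ _ hj
  have hc'₁ : ∀ j, c' j ∈ Set.Icc (0 : ℝ) 1 := by
    intro j
    by_cases hj : j ∈ s
    · rw [hc'_mem j hj]; exact mem_Icc_of_mem_feasibleAllocs hc hj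
    · rw [hc'_notMem j hj]; exact hA₁ j
  obtain ⟨y, hy, hy_uIcc, hz⟩ := exists_mem_boundedAllocs_and_sub_mem_feasibleAllocs hA.1 hc'₁
    hc'_notMem (by rw [sum_congr rfl hc'_mem]; exact hc.2)
  have hy_notMem : ∀ j ∉ s, y j = A j := fun j hj => by
    simpa [hc'_notMem j hj] using hy_uIcc j
  have hle : ∑ j, g j (c' j) ≤ ∑ j, g j (y j) := by
    have := sum_le_sum fun j (_ : j ∈ univ) =>
      (hconc j).add_le_add_sub_of_mem_uIcc (hc'₁ j) (hA₁ j) (hy_uIcc j)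
    simp only [sum_add_distrib] at this
    linarith [hA.2 _ hz]
  have hsplit : ∀ f : ι → ℝ, (∀ j ∉ s, f j = g j (A j)) →
      ∑ j, f j = ∑ j ∈ s, f j + ∑ j ∈ sᶜ, g j (A j) := fun f hf => by
    rw [← sum_add_sum_compl s f, sum_congr rfl fun j hj => hf j (mem_compl.1 hj)]
  rw [hsplit _ fun j hj => by rw [hc'_notMem j hj], hsplit _ fun j hj => by rw [hy_notMem j hj],
    sum_congr rfl fun j hj => by rw [hc'_mem j hj]] at hle
  exact ⟨y, hy, by linarith⟩

lemma exists_isOptimalAlloc_ge (hg : ∀ j, ContinuousOn (g j) (Set.Icc 0 1))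
    (hconc : ∀ j, ConcaveOn ℝ (Set.Icc 0 1) (g j)) {A : ι → ℝ} (hA : IsOptimalAlloc univ g A)
    (s : Finset ι) : ∃ B, IsOptimalAlloc s g B ∧ ∀ j, A j ≤ B j := by
  have hAs : ∑ j ∈ s, A j ≤ 1 :=
    (sum_le_sum_of_subset_of_nonneg (subset_univ s) fun j _ _ => hA.1.1 j).trans hA.1.2
  obtain ⟨B, ⟨hB, hBs⟩, hBmax⟩ := exists_isMaxOn_boundedAllocs s hg
    (fun j => mem_Icc_of_mem_feasibleAllocs hA.1 (mem_univ j)) hAs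
  refine ⟨B, ⟨⟨fun j => (hA.1.1 j).trans (hB j trivial).1, hBs⟩, fun c hc => ?_⟩,
    fun j => (hB j trivial).1⟩
  obtain ⟨y, hy, hcy⟩ := exists_mem_boundedAllocs_welfare_ge hconc hA hc
  exact hcy.trans (hBmax hy)

lemma sum_sum_erase (f : ι → ℝ) :
    ∑ i, ∑ j ∈ univ.erase i, f j = ((Fintype.card ι : ℝ) - 1) * ∑ j, f j := by
  simp only [sum_erase_eq_sub (mem_univ _), sum_sub_distrib, sum_const, card_univ, nsmul_eq_mul]
  ring

lemma clarkeSurplus_sub_ge [Nonempty ι] {g g' : ι → ℝ → ℝ}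
    (hg : ∀ j, ContinuousOn (g j) (Set.Icc 0 1)) (hg' : ∀ j, ContinuousOn (g' j) (Set.Icc 0 1))
    (hconc : ∀ j, ConcaveOn ℝ (Set.Icc 0 1) (g j))
    (hconc' : ∀ j, ConcaveOn ℝ (Set.Icc 0 1) (g' j))
    (hmono : ∀ j, MonotoneOn (fun x => g' j x - g j x) (Set.Icc 0 1))
    {A A' : ι → ℝ} (hA : IsOptimalAlloc univ g A) (hA' : IsOptimalAlloc univ g' A') :
    ((Fintype.card ι : ℝ) - 1) *
        (∑ j, (g' j (A j) - g j (A j)) - ∑ j, (g' j (A' j) - g j (A' j))) ≤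
      clarkeSurplus g' - clarkeSurplus g := by
  choose B hB hAB using fun i => exists_isOptimalAlloc_ge hg hconc hA (univ.erase i)
  choose B' hB' _ using fun i => exists_isOptimalAlloc_ge hg' hconc' hA' (univ.erase i)
  have hcard : (0 : ℝ) ≤ Fintype.card ι - 1 :=
    sub_nonneg.2 (by exact_mod_cast Fintype.card_pos (α := ι))
  have hfull : maxWelfare univ g' - maxWelfare univ g ≤ ∑ j, (g' j (A' j) - g j (A' j)) := by
    rw [hA.maxWelfare_eq, hA'.maxWelfare_eq, sum_sub_distrib]
    linarith [hA.2 A' hA'.1]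
  have hpart : ∀ i, ∑ j ∈ univ.erase i, (g' j (A j) - g j (A j)) ≤
      maxWelfare (univ.erase i) g' - maxWelfare (univ.erase i) g := by
    intro i
    rw [(hB i).maxWelfare_eq, (hB' i).maxWelfare_eq]
    calc ∑ j ∈ univ.erase i, (g' j (A j) - g j (A j))
        ≤ ∑ j ∈ univ.erase i, (g' j (B i j) - g j (B i j)) := sum_le_sum fun j hj =>
          hmono j (mem_Icc_of_mem_feasibleAllocs hA.1 (mem_univ j))
            (mem_Icc_of_mem_feasibleAllocs (hB i).1 hj) (hAB i j)
      _ ≤ _ := by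
          rw [sum_sub_distrib]
          linarith [(hB' i).2 (B i) (hB i).1]
  have hsum := sum_le_sum fun i (_ : i ∈ univ) => hpart i
  have hscaled := mul_le_mul_of_nonneg_left hfull hcard
  rw [sum_sum_erase] at hsum
  simp only [clarkeSurplus, sum_sub_distrib] at hsum hscaled ⊢
  linarith

theorem clarkeSurplus_le_of_monotoneOn_sub [Nonempty ι] {g₀ g₁ : ι → ℝ → ℝ}
    (hg₀ : ∀ j, ContinuousOn (g₀ j) (Set.Icc 0 1)) (hg₁ : ∀ j, ContinuousOn (g₁ j) (Set.Icc 0 1))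
    (hconc₀ : ∀ j, ConcaveOn ℝ (Set.Icc 0 1) (g₀ j))
    (hconc₁ : ∀ j, ConcaveOn ℝ (Set.Icc 0 1) (g₁ j))
    (hmono : ∀ j, MonotoneOn (fun x => g₁ j x - g₀ j x) (Set.Icc 0 1)) :
    clarkeSurplus g₀ ≤ clarkeSurplus g₁ := by
  set w : ℝ → ι → ℝ → ℝ := fun σ j x => (1 - σ) * g₀ j x + σ * g₁ j x
  have hw₀ : w 0 = g₀ := by funext j x; simp [w]
  have hw₁ : w 1 = g₁ := by funext j x; simp [w]
  have hwc : ∀ σ j, ContinuousOn (w σ j) (Set.Icc 0 1) := fun σ j =>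
    (continuousOn_const.mul (hg₀ j)).add (continuousOn_const.mul (hg₁ j))
  have hwconc : ∀ σ ∈ Set.Icc (0 : ℝ) 1, ∀ j, ConcaveOn ℝ (Set.Icc 0 1) (w σ j) := fun σ hσ j =>
    ((hconc₀ j).smul (sub_nonneg.2 hσ.2)).add ((hconc₁ j).smul hσ.1)
  have hw_sub : ∀ σ τ j x, w τ j x - w σ j x = (τ - σ) * (g₁ j x - g₀ j x) := by
    intro σ τ j x
    simp only [w]
    ring
  choose A hA using fun σ => exists_isOptimalAlloc (hwc σ)
  have key := le_of_forall_mul_sub_le_sub (F := fun σ => clarkeSurplus (w σ))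
    (φ := fun σ => ((Fintype.card ι : ℝ) - 1) * ∑ j, (g₁ j (A σ j) - g₀ j (A σ j)))
    fun σ hσ τ hτ hστ => by
      have hmono' : ∀ j, MonotoneOn (fun x => w τ j x - w σ j x) (Set.Icc 0 1) :=
        fun j x hx y hy hxy => by
          simp only [hw_sub]
          exact mul_le_mul_of_nonneg_left (hmono j hx hy hxy) (sub_nonneg.2 hστ)
      have := clarkeSurplus_sub_ge (hwc σ) (hwc τ) (hwconc σ hσ) (hwconc τ hτ) hmono' (hA σ) (hA τ)
      simp only [hw_sub, ← mul_sum] at this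
      linear_combination this
  simpa only [hw₀, hw₁] using key

lemma clarkeSurplus_div {V : ℝ} {U : ι → ℝ} (hV : IsGreatest (welfareSet univ g) V)
    (hU : ∀ i, IsGreatest (welfareSet (univ.erase i) g) (U i)) {l : ℝ} (hl : 0 < l) :
    clarkeSurplus (fun j x => g j x / l) = (-((Fintype.card ι : ℝ) - 1) * V + ∑ i, U i) / l := by
  unfold clarkeSurplus maxWelfare
  rw [(hV.welfareSet_div hl).csSup_eq,
    sum_congr rfl fun i _ => ((hU i).welfareSet_div hl).csSup_eq, ← sum_div]
  ring

end Welfare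

section ValuationAtZero

variable {v : ℝ → ℝ → ℝ} {I : Set ℝ}

lemma monotoneOn_of_forall_pos (hmono : ∀ t, 0 < t → MonotoneOn (fun a => v a t) I)
    (hcont : ∀ a ∈ I, ContinuousAt (v a) 0) {t : ℝ} (ht : 0 ≤ t) :
    MonotoneOn (fun a => v a t) I := by
  rcases ht.eq_or_lt with rfl | ht
  · exact fun x hx y hy hxy =>
      le_of_forall_pos_of_continuousAt (hcont x hx) (hcont y hy) fun t ht => hmono t ht hx hy hxy
  · exact hmono t ht

lemma concaveOn_of_forall_pos (hconc : ∀ t, 0 < t → ConcaveOn ℝ I (fun a => v a t))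
    (hcont : ∀ a ∈ I, ContinuousAt (v a) 0) {t : ℝ} (ht : 0 ≤ t) :
    ConcaveOn ℝ I (fun a => v a t) := by
  rcases ht.eq_or_lt with rfl | ht
  · have hI := (hconc 1 one_pos).1
    exact ⟨hI, fun x hx y hy a b ha hb hab =>
      le_of_forall_pos_of_continuousAt (((hcont x hx).const_smul a).add ((hcont y hy).const_smul b))
        (hcont _ (hI hx hy ha hb hab)) fun t ht => (hconc t ht).2 hx hy ha hb hab⟩
  · exact hconc t ht

end ValuationAtZero

lemma monotoneOn_div_sub_div {v Da : ℝ → ℝ → ℝ}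
    (hmono : MonotoneOn (fun a => v a 0) (Set.Icc 0 1))
    (hDa : ∀ a ∈ Set.Icc (0 : ℝ) 1, ∀ t, HasDerivAt (fun x => v x t) (Da a t) a)
    (hkey : ∀ a ∈ Set.Icc (0 : ℝ) 1, AntitoneOn (fun t => t⁻¹ * Da a t) (Set.Ioi 0))
    {θ l₁ l₂ : ℝ} (hθ : 0 ≤ θ) (hl₁ : 0 < l₁) (hl : l₁ ≤ l₂) :
    MonotoneOn (fun a => v a (l₁ * θ) / l₁ - v a (l₂ * θ) / l₂) (Set.Icc 0 1) := by
  have hl₂ : 0 < l₂ := hl₁.trans_le hl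
  rcases hθ.eq_or_lt with rfl | hθ
  · have hcoef : 0 ≤ l₁⁻¹ - l₂⁻¹ := sub_nonneg.2 (inv_anti₀ hl₁ hl)
    have e : ∀ a, v a 0 / l₁ - v a 0 / l₂ = (l₁⁻¹ - l₂⁻¹) * v a 0 := fun a => by ring
    intro x hx y hy hxy
    simp only [mul_zero, e]
    exact mul_le_mul_of_nonneg_left (hmono hx hy hxy) hcoef
  have hderiv : ∀ a ∈ Set.Icc (0 : ℝ) 1, HasDerivAt
      (fun x => v x (l₁ * θ) / l₁ - v x (l₂ * θ) / l₂)
      (Da a (l₁ * θ) / l₁ - Da a (l₂ * θ) / l₂) a := fun a ha =>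
    ((hDa a ha _).div_const _).sub ((hDa a ha _).div_const _)
  refine monotoneOn_of_hasDerivWithinAt_nonneg (convex_Icc 0 1)
    (fun a ha => (hderiv a ha).continuousAt.continuousWithinAt)
    (fun a ha => (hderiv a (interior_subset ha)).hasDerivWithinAt) fun a ha => ?_
  have ha := interior_subset ha
  have hanti := hkey a ha (mul_pos hl₁ hθ) (mul_pos hl₂ hθ) (mul_le_mul_of_nonneg_right hl hθ.le)
  have e : ∀ l, 0 < l → Da a (l * θ) / l = θ * ((l * θ)⁻¹ * Da a (l * θ)) := fun l hl => by
    field_simp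
  rw [e l₁ hl₁, e l₂ hl₂, sub_nonneg]
  exact mul_le_mul_of_nonneg_left hanti hθ.le

theorem pS_scaling_general {n : ℕ} (hn : 2 ≤ n)
    (vbar : Fin n → ℝ → ℝ → ℝ)  -- vbar i a t
    (Dt : Fin n → ℝ → ℝ → ℝ)    -- ∂ vbar i a t / ∂ t
    (Da : Fin n → ℝ → ℝ → ℝ)    -- ∂ vbar i a t / ∂ a
    (hconc : ∀ i t, 0 < t → StrictConcaveOn ℝ (Set.Icc (0:ℝ) 1) (fun a => vbar i a t))
    (hmono : ∀ i t, 0 < t → StrictMonoOn (fun a => vbar i a t) (Set.Icc 0 1))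
    (hDt : ∀ i a t, a ∈ Set.Icc (0:ℝ) 1 → HasDerivAt (fun s => vbar i a s) (Dt i a t) t)
    (hDa : ∀ i a t, a ∈ Set.Icc (0:ℝ) 1 → HasDerivAt (fun s => vbar i s t) (Da i a t) a)
    (hkey : ∀ i, ∀ a ∈ Set.Icc (0:ℝ) 1, AntitoneOn (fun t => t⁻¹ * Da i a t) (Set.Ioi 0))
    (astar : (Fin n → ℝ) → Fin n → ℝ)
    (hastar : ∀ θ : Fin n → ℝ,
      IsGreatest {w | ∃ a : Fin n → ℝ, (∀ j, 0 ≤ a j) ∧ (∑ j, a j) ≤ 1 ∧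
        w = ∑ j, vbar j (a j) (θ j)} (∑ j, vbar j (astar θ j) (θ j)))
    (astarm : Fin n → (Fin n → ℝ) → Fin n → ℝ)
    (hastarm : ∀ (i : Fin n) (θ : Fin n → ℝ),
      IsGreatest {w | ∃ a : Fin n → ℝ, (∀ j, 0 ≤ a j) ∧ (∑ j ∈ Finset.univ.erase i, a j) ≤ 1 ∧
        w = ∑ j ∈ Finset.univ.erase i, vbar j (a j) (θ j)}
        (∑ j ∈ Finset.univ.erase i, vbar j (astarm i θ j) (θ j)))
    (pS : (Fin n → ℝ) → ℝ)
    (hpS : ∀ θ, pS θ = -((n : ℝ) - 1) * (∑ j, vbar j (astar θ j) (θ j))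
        + ∑ i, ∑ j ∈ Finset.univ.erase i, vbar j (astarm i θ j) (θ j)) :
    ∀ θ : Fin n → ℝ, (∀ j, 0 ≤ θ j) →
      AntitoneOn (fun lam => pS (lam • θ) / lam) (Set.Ioi 0) := by
  intro θ hθ l₁ hl₁ l₂ hl₂ hl
  have : Nonempty (Fin n) := ⟨⟨0, by omega⟩⟩
  have hcont : ∀ j, ∀ a ∈ Set.Icc (0 : ℝ) 1, ContinuousAt (vbar j a) 0 :=
    fun j a ha => (hDt j a 0 ha).continuousAt
  have hcontOn : ∀ j t l, ContinuousOn (fun x => vbar j x t / l) (Set.Icc 0 1) :=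
    fun j t l a ha => ((hDa j a t ha).continuousAt.continuousWithinAt).div_const l
  have hconcOn : ∀ j, ∀ l > 0, ConcaveOn ℝ (Set.Icc 0 1) (fun x => vbar j x (l * θ j) / l) :=
    fun j l hl => by
      simpa only [smul_eq_mul, div_eq_inv_mul] using
        (concaveOn_of_forall_pos (fun t ht => (hconc j t ht).concaveOn) (hcont j)
          (mul_nonneg hl.le (hθ j))).smul (inv_nonneg.2 hl.le)
  have hclarke : ∀ l > 0,
      clarkeSurplus (fun j x => vbar j x (l * θ j) / l) = pS (l • θ) / l := fun l hl =>
    (clarkeSurplus_div (g := fun j x => vbar j x (l * θ j)) (hastar (l • θ))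
      (fun i => hastarm i (l • θ)) hl).trans (by rw [hpS, Fintype.card_fin])
  change pS (l₂ • θ) / l₂ ≤ pS (l₁ • θ) / l₁
  rw [← hclarke l₁ hl₁, ← hclarke l₂ hl₂]
  exact clarkeSurplus_le_of_monotoneOn_sub (fun j => hcontOn j _ _) (fun j => hcontOn j _ _)
    (fun j => hconcOn j l₂ hl₂) (fun j => hconcOn j l₁ hl₁) fun j =>
    monotoneOn_div_sub_div (monotoneOn_of_forall_pos (fun t ht => (hmono j t ht).monotoneOn)
      (hcont j) le_rfl) (fun a ha t => hDa j a t ha) (hkey j) (hθ j) hl₁ hl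

/-- for fixed θ, the map λ ↦ p_S(λθ)/λ is decreasing on (0,∞). -/
theorem pS_scaling {n : ℕ} (hn : 2 ≤ n)
    (vbar : Fin n → ℝ → ℝ → ℝ)  -- vbar i a t
    (Dt : Fin n → ℝ → ℝ → ℝ)    -- ∂ vbar i a t / ∂ t
    (Da : Fin n → ℝ → ℝ → ℝ)    -- ∂ vbar i a t / ∂ a
    (hconc : ∀ i t, 0 < t → StrictConcaveOn ℝ (Set.Icc (0:ℝ) 1) (fun a => vbar i a t))
    (hmono : ∀ i t, 0 < t → StrictMonoOn (fun a => vbar i a t) (Set.Icc 0 1))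
    (hdiff : ∀ i t, 0 < t → ContDiffOn ℝ 1 (fun a => vbar i a t) (Set.Icc 0 1))
    (hDt : ∀ i a t, a ∈ Set.Icc (0:ℝ) 1 → HasDerivAt (fun s => vbar i a s) (Dt i a t) t)
    (hB : ∀ i, ∃ B : ℝ → ℝ, ∀ a ∈ Set.Icc (0:ℝ) 1, ∀ t, |Dt i a t| ≤ B t)
    (hDa : ∀ i a t, a ∈ Set.Icc (0:ℝ) 1 → HasDerivAt (fun s => vbar i s t) (Da i a t) a)
    (hkey : ∀ i, ∀ a ∈ Set.Icc (0:ℝ) 1, AntitoneOn (fun t => t⁻¹ * Da i a t) (Set.Ioi 0))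
    (astar : (Fin n → ℝ) → Fin n → ℝ)
    (hastarfeas : ∀ θ, (∀ j, 0 ≤ astar θ j) ∧ (∑ j, astar θ j) ≤ 1)
    (hastar : ∀ θ : Fin n → ℝ,
      IsGreatest {w | ∃ a : Fin n → ℝ, (∀ j, 0 ≤ a j) ∧ (∑ j, a j) ≤ 1 ∧
        w = ∑ j, vbar j (a j) (θ j)} (∑ j, vbar j (astar θ j) (θ j)))
    (astarm : Fin n → (Fin n → ℝ) → Fin n → ℝ)
    (hastarmfeas : ∀ i θ, (∀ j, 0 ≤ astarm i θ j) ∧ (∑ j ∈ Finset.univ.erase i, astarm i θ j) ≤ 1)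
    (hastarm : ∀ (i : Fin n) (θ : Fin n → ℝ),
      IsGreatest {w | ∃ a : Fin n → ℝ, (∀ j, 0 ≤ a j) ∧ (∑ j ∈ Finset.univ.erase i, a j) ≤ 1 ∧
        w = ∑ j ∈ Finset.univ.erase i, vbar j (a j) (θ j)}
        (∑ j ∈ Finset.univ.erase i, vbar j (astarm i θ j) (θ j)))
    (hastarmInd : ∀ i θ θ', (∀ j, j ≠ i → θ j = θ' j) → astarm i θ = astarm i θ')
    (pS : (Fin n → ℝ) → ℝ)
    (hpS : ∀ θ, pS θ = -((n : ℝ) - 1) * (∑ j, vbar j (astar θ j) (θ j))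
        + ∑ i, ∑ j ∈ Finset.univ.erase i, vbar j (astarm i θ j) (θ j)) :
    ∀ θ : Fin n → ℝ, (∀ j, 0 ≤ θ j) →
      AntitoneOn (fun lam => pS (lam • θ) / lam) (Set.Ioi 0) :=
  pS_scaling_general hn vbar Dt Da hconc hmono hDt hDa hkey astar hastar astarm hastarm pS hpS
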